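/- arXiv:2208.14310 — 4 statements merged into one kernel-verified Lean document; each statement's English description precedes it below -/
import Mathlib

section
/- Let d ≥ 1, let ρ be a separable density matrix on ℂ^d ⊗ ℂ^d, and let Ψ be a maximally entangled state on ℂ^d ⊗ ℂ^d. Then the expectation value satisfies ⟨Ψ, ρ Ψ⟩ ≤ 1/d. -/
open scoped Matrix Kronecker ComplexOrder

noncomputable section

/-- Hermitian inner product on `n → ℂ` (conjugate-linear in the first argument). -/
def cinner {n : Type*} [Fintype n] (v w : n → ℂ) : ℂ :=
  ∑ i, (starRingEnd ℂ) (v i) * w i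

/-- Tensor (Kronecker) product of vectors. -/
def tensorVec {α β : Type*} (v : α → ℂ) (w : β → ℂ) : α × β → ℂ :=
  fun p => v p.1 * w p.2

/-- The projector `|v⟩⟨v|`. -/
def vecProj {n : Type*} (v : n → ℂ) : Matrix n n ℂ :=
  Matrix.of fun i j => v i * (starRingEnd ℂ) (v j)

/-- A density matrix: positive semidefinite with unit trace. -/
def IsDensityMatrix {n : Type*} [Fintype n] (ρ : Matrix n n ℂ) : Prop :=
  ρ.PosSemidef ∧ ρ.trace = 1

open Classical in
/-- Positive semidefinite square root (0 on non-PSD input). -/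
def msqrt {n : Type*} [Fintype n] [DecidableEq n] (ρ : Matrix n n ℂ) : Matrix n n ℂ :=
  if h : ρ.PosSemidef then
    h.1.eigenvectorUnitary.1 * Matrix.diagonal ((↑) ∘ (√·) ∘ h.1.eigenvalues) *
      (star h.1.eigenvectorUnitary : Matrix n n ℂ)
  else 0

/-- Uhlmann root fidelity `F(ρ,σ) = tr √(√ρ σ √ρ)`. -/
def rootFidelity {n : Type*} [Fintype n] [DecidableEq n] (ρ σ : Matrix n n ℂ) : ℝ :=
  ((msqrt (msqrt ρ * σ * msqrt ρ)).trace).re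

/-- Partial trace over the second tensor factor. -/
def ptraceC {α γ : Type*} [Fintype γ] (ρ : Matrix (α × γ) (α × γ) ℂ) : Matrix α α ℂ :=
  Matrix.of fun i j => ∑ k, ρ (i, k) (j, k)

/-- Partial trace over the first tensor factor. -/
def ptraceA {α β : Type*} [Fintype α] (ρ : Matrix (α × β) (α × β) ℂ) : Matrix β β ℂ :=
  Matrix.of fun i j => ∑ k, ρ (k, i) (k, j)

/-- Partial transpose on the second tensor factor. -/
def ptB {α β : Type*} (ρ : Matrix (α × β) (α × β) ℂ) : Matrix (α × β) (α × β) ℂ :=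
  Matrix.of fun p q => ρ (p.1, q.2) (q.1, p.2)

open Classical in
/-- Negativity: the sum of the absolute values of the negative eigenvalues of
the partial transpose (0 if the partial transpose is not Hermitian). -/
def negativity {α β : Type*} [Fintype α] [Fintype β] [DecidableEq α] [DecidableEq β]
    (ρ : Matrix (α × β) (α × β) ℂ) : ℝ :=
  if h : (ptB ρ).IsHermitian then ∑ i, max 0 (- h.eigenvalues i) else 0

/-- A family of vectors is an orthonormal basis family (orthonormal, indexed by the
same finite type as the dimension, hence a basis). -/
def IsONB {n : Type*} [Fintype n] [DecidableEq n] (x : n → n → ℂ) : Prop :=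
  ∀ j k, cinner (x j) (x k) = if j = k then 1 else 0

/-- Separability: a finite convex combination of projectors onto product unit vectors. -/
def IsSeparableDM {α β : Type*} [Fintype α] [Fintype β]
    (ρ : Matrix (α × β) (α × β) ℂ) : Prop :=
  ∃ (m : ℕ) (p : Fin m → ℝ) (a : Fin m → α → ℂ) (b : Fin m → β → ℂ),
    (∀ j, 0 ≤ p j) ∧ (∑ j, p j = 1) ∧
    (∀ j, cinner (a j) (a j) = 1) ∧ (∀ j, cinner (b j) (b j) = 1) ∧
    ρ = ∑ j, (p j : ℂ) • vecProj (tensorVec (a j) (b j))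

/-- A maximally entangled state on `ℂ^d ⊗ ℂ^d`. -/
def IsMaxEnt {d : ℕ} (Ψ : Fin d × Fin d → ℂ) : Prop :=
  ∃ x y : Fin d → Fin d → ℂ, IsONB x ∧ IsONB y ∧
    Ψ = ((Real.sqrt d : ℂ)⁻¹) • ∑ j, tensorVec (x j) (y j)

/-! For a product vector, `⟨a ⊗ b, Ψ⟩ = d^{-1/2} ∑ₖ ⟨a, xₖ⟩⟨b, yₖ⟩`. By Cauchy–Schwarz in `k`
followed by Bessel's inequality for the orthonormal families `x` and `y`, the sum has modulus
at most `‖a‖‖b‖ = 1`, so every pure product state has overlap at most `1/d` with `Ψ`. The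
expectation of a separable state is a convex combination of such overlaps. -/

open scoped InnerProductSpace

section CInner

variable {n : Type*} [Fintype n]

lemma cinner_eq_inner (v w : n → ℂ) :
    cinner v w = ⟪WithLp.toLp 2 v, WithLp.toLp 2 w⟫_ℂ := by
  simp [cinner, PiLp.inner_apply, mul_comm]

lemma cinner_smul_right (v w : n → ℂ) (c : ℂ) : cinner v (c • w) = c * cinner v w := by
  simp only [cinner_eq_inner, WithLp.toLp_smul, inner_smul_right]

lemma cinner_sum_right {ι : Type*} (s : Finset ι) (v : n → ℂ) (w : ι → n → ℂ) :
    cinner v (∑ j ∈ s, w j) = ∑ j ∈ s, cinner v (w j) := by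
  simp only [cinner_eq_inner, WithLp.toLp_sum, inner_sum]

lemma norm_toLp_eq_one_of_cinner_self {v : n → ℂ} (hv : cinner v v = 1) :
    ‖WithLp.toLp 2 v‖ = 1 := by
  rw [norm_eq_sqrt_re_inner (𝕜 := ℂ), ← cinner_eq_inner, hv, RCLike.one_re, Real.sqrt_one]

lemma cinner_conj_symm (v w : n → ℂ) : starRingEnd ℂ (cinner w v) = cinner v w := by
  simp only [cinner_eq_inner, inner_conj_symm]

lemma vecProj_mulVec (v w : n → ℂ) : vecProj v *ᵥ w = cinner v w • v := by
  ext i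
  simp only [vecProj, Matrix.mulVec, dotProduct, Matrix.of_apply, cinner, Pi.smul_apply,
    smul_eq_mul, Finset.sum_mul]
  exact Finset.sum_congr rfl fun j _ => by ring

lemma cinner_vecProj_mulVec (v Ψ : n → ℂ) :
    cinner Ψ (vecProj v *ᵥ Ψ) = (‖cinner v Ψ‖ ^ 2 : ℝ) := by
  rw [vecProj_mulVec, cinner_smul_right, ← cinner_conj_symm Ψ v, Complex.mul_conj',
    Complex.ofReal_pow]

lemma IsONB.orthonormal [DecidableEq n] {x : n → n → ℂ} (hx : IsONB x) :
    Orthonormal ℂ fun j => WithLp.toLp 2 (x j) :=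
  orthonormal_iff_ite.2 fun j k => by rw [← cinner_eq_inner, hx]

lemma cinner_sum_smul_vecProj_mulVec {ι : Type*} (s : Finset ι) (p : ι → ℝ) (v : ι → n → ℂ)
    (Ψ : n → ℂ) :
    cinner Ψ ((∑ j ∈ s, (p j : ℂ) • vecProj (v j)) *ᵥ Ψ) =
      (∑ j ∈ s, p j * ‖cinner (v j) Ψ‖ ^ 2 : ℝ) := by
  simp only [Matrix.sum_mulVec, Matrix.smul_mulVec, cinner_sum_right, cinner_smul_right,
    cinner_vecProj_mulVec]
  push_cast
  rfl

end CInner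

lemma cinner_tensorVec {α β : Type*} [Fintype α] [Fintype β]
    (a u : α → ℂ) (b w : β → ℂ) :
    cinner (tensorVec a b) (tensorVec u w) = cinner a u * cinner b w := by
  simp only [cinner, tensorVec, Finset.sum_mul_sum, Fintype.sum_prod_type, map_mul]
  exact Finset.sum_congr rfl fun i _ => Finset.sum_congr rfl fun k _ => by ring

lemma norm_sum_inner_mul_inner_le {𝕜 E ι : Type*} [RCLike 𝕜] [NormedAddCommGroup E]
    [InnerProductSpace 𝕜 E] [Fintype ι] {x y : ι → E} (hx : Orthonormal 𝕜 x)
    (hy : Orthonormal 𝕜 y) (a b : E) :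
    ‖∑ k, ⟪a, x k⟫_𝕜 * ⟪b, y k⟫_𝕜‖ ≤ ‖a‖ * ‖b‖ := by
  have bessel {v : ι → E} (hv : Orthonormal 𝕜 v) (c : E) : √(∑ k, ‖⟪c, v k⟫_𝕜‖ ^ 2) ≤ ‖c‖ := by
    have := hv.sum_inner_products_le c (s := Finset.univ)
    simp_rw [norm_inner_symm (𝕜 := 𝕜) (v _) c] at this
    exact (Real.sqrt_le_sqrt this).trans_eq (Real.sqrt_sq (norm_nonneg c))
  calc ‖∑ k, ⟪a, x k⟫_𝕜 * ⟪b, y k⟫_𝕜‖ ≤ ∑ k, ‖⟪a, x k⟫_𝕜‖ * ‖⟪b, y k⟫_𝕜‖ :=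
        (norm_sum_le _ _).trans_eq (Finset.sum_congr rfl fun k _ => norm_mul _ _)
    _ ≤ √(∑ k, ‖⟪a, x k⟫_𝕜‖ ^ 2) * √(∑ k, ‖⟪b, y k⟫_𝕜‖ ^ 2) :=
        Real.sum_mul_le_sqrt_mul_sqrt _ _ _
    _ ≤ ‖a‖ * ‖b‖ := mul_le_mul (bessel hx a) (bessel hy b) (Real.sqrt_nonneg _) (norm_nonneg _)

lemma sq_norm_cinner_tensorVec_le_of_isMaxEnt {d : ℕ} {Ψ : Fin d × Fin d → ℂ}
    (hΨ : IsMaxEnt Ψ) {a b : Fin d → ℂ} (ha : cinner a a = 1) (hb : cinner b b = 1) :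
    ‖cinner (tensorVec a b) Ψ‖ ^ 2 ≤ (d : ℝ)⁻¹ := by
  obtain ⟨x, y, hx, hy, rfl⟩ := hΨ
  have overlap_le_one : ‖∑ k, cinner a (x k) * cinner b (y k)‖ ≤ 1 := by
    simpa only [cinner_eq_inner, norm_toLp_eq_one_of_cinner_self ha,
      norm_toLp_eq_one_of_cinner_self hb, mul_one] using
      norm_sum_inner_mul_inner_le hx.orthonormal hy.orthonormal (WithLp.toLp 2 a) (WithLp.toLp 2 b)
  have norm_le : ‖cinner (tensorVec a b) ((√d : ℂ)⁻¹ • ∑ k, tensorVec (x k) (y k))‖ ≤ (√d)⁻¹ := by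
    rw [cinner_smul_right, cinner_sum_right, norm_mul, norm_inv, Complex.norm_real,
      Real.norm_of_nonneg (Real.sqrt_nonneg _)]
    simp only [cinner_tensorVec]
    exact mul_le_of_le_one_right (by positivity) overlap_le_one
  calc _ ≤ ((√d)⁻¹) ^ 2 := pow_le_pow_left₀ (norm_nonneg _) norm_le 2
    _ = (d : ℝ)⁻¹ := by rw [inv_pow, Real.sq_sqrt d.cast_nonneg]

theorem separable_expectation_maxEnt_le_general (d : ℕ)
    (ρ : Matrix (Fin d × Fin d) (Fin d × Fin d) ℂ)
    (hsep : IsSeparableDM ρ)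
    (Ψ : Fin d × Fin d → ℂ) (hΨ : IsMaxEnt Ψ) :
    cinner Ψ (ρ *ᵥ Ψ) ≤ ((d : ℂ))⁻¹ := by
  obtain ⟨m, p, a, b, hp, hpsum, ha, hb, rfl⟩ := hsep
  have mixture_le : ∑ j, p j * ‖cinner (tensorVec (a j) (b j)) Ψ‖ ^ 2 ≤ (d : ℝ)⁻¹ :=
    calc _ ≤ ∑ j, p j * (d : ℝ)⁻¹ := by
          gcongr with j
          · exact hp j
          · exact sq_norm_cinner_tensorVec_le_of_isMaxEnt hΨ (ha j) (hb j)
      _ = (d : ℝ)⁻¹ := by rw [← Finset.sum_mul, hpsum, one_mul]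
  rw [cinner_sum_smul_vecProj_mulVec, ← Complex.ofReal_natCast, ← Complex.ofReal_inv]
  exact Complex.real_le_real.2 mixture_le

/-- for a separable density matrix `ρ` on `ℂ^d ⊗ ℂ^d` and a maximally
entangled state `Ψ`, the expectation value satisfies `⟨Ψ, ρ Ψ⟩ ≤ 1/d`. -/
theorem separable_expectation_maxEnt_le (d : ℕ) (hd : 1 ≤ d)
    (ρ : Matrix (Fin d × Fin d) (Fin d × Fin d) ℂ)
    (hρ : IsDensityMatrix ρ) (hsep : IsSeparableDM ρ)
    (Ψ : Fin d × Fin d → ℂ) (hΨ : IsMaxEnt Ψ) :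
    cinner Ψ (ρ *ᵥ Ψ) ≤ ((d : ℂ))⁻¹ :=
  separable_expectation_maxEnt_le_general d ρ hsep Ψ hΨ

end
end

section
/- Let ρ and σ be density matrices on ℂ^{d_{AB}} ⊗ ℂ^{d_C} (matrices indexed by pairs (i,k)). Then the Uhlmann root fidelity is monotone under the partial trace over the second factor: F(ρ, σ) ≤ F(tr_C ρ, tr_C σ). -/
/-!
For `A, B ≥ 0` the root fidelity is `F(A, B) = max {Re tr X | [[A, X], [Xᴴ, B]] ≥ 0}`.
The maximum is attained at `X = √A Wᴴ √B`, where `√B √A = W √(√A B √A)` is a polar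
decomposition. For the bound, a positive block matrix is a Gram matrix, so `X = R₁ᴴ R₂` with
`R₁ = V₁ √A`, `R₂ = V₂ √B` for contractions `V₁, V₂`, and `Re tr (Cᴴ D P) ≤ tr P` for
contractions `C, D` and `P ≥ 0`. The partial trace of a Gram matrix is the Gram matrix of the
reshaped factors and it preserves the trace, so it maps the optimal block for `(ρ, σ)` to an
admissible block for `(tr_C ρ, tr_C σ)` with the same `Re tr X`.
-/

open scoped Matrix Kronecker ComplexOrder

noncomputable section

open scoped MatrixOrder
open Matrix

namespace Matrix

variable {𝕜 l m n : Type*} [RCLike 𝕜] [Fintype l] [Fintype m] [Fintype n] [DecidableEq n]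

lemma cfc_mul_cfc (A : Matrix n n 𝕜) (f g : ℝ → ℝ) :
    cfc f A * cfc g A = cfc (fun x => f x * g x) A :=
  (cfc_mul f g A (A.finite_real_spectrum.continuousOn _)
    (A.finite_real_spectrum.continuousOn _)).symm

lemma IsHermitian.cfc_mul_self {A : Matrix n n 𝕜} (hA : A.IsHermitian) (f : ℝ → ℝ) :
    cfc f A * A = cfc (fun x => f x * x) A := by
  conv_lhs => enter [2]; rw [← cfc_id' ℝ A hA]
  exact cfc_mul_cfc A f _

lemma IsHermitian.self_mul_cfc {A : Matrix n n 𝕜} (hA : A.IsHermitian) (f : ℝ → ℝ) :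
    A * cfc f A = cfc (fun x => x * f x) A := by
  conv_lhs => enter [1]; rw [← cfc_id' ℝ A hA]
  exact cfc_mul_cfc A _ f

lemma isHermitian_sqrt (A : Matrix n n 𝕜) : (CFC.sqrt A).IsHermitian :=
  (CFC.sqrt_nonneg A).isSelfAdjoint

def IsContraction (V : Matrix m n 𝕜) : Prop := Vᴴ * V ≤ 1

lemma IsContraction.mul {V : Matrix m n 𝕜} {W : Matrix n n 𝕜} (hV : V.IsContraction)
    (hW : W.IsContraction) : (V * W).IsContraction := by
  calc (V * W)ᴴ * (V * W) = star W * (Vᴴ * V) * W := by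
        rw [conjTranspose_mul, star_eq_conjTranspose]; simp only [Matrix.mul_assoc]
    _ ≤ star W * 1 * W := star_left_conjugate_le_conjugate hV W
    _ ≤ 1 := by rw [Matrix.mul_one, star_eq_conjTranspose]; exact hW

/-- Take `V = R S⁺` with `S⁺ = cfc (·⁻¹) S`: `Rᴴ R = S * S` forces `R` to vanish on `ker S`. -/
lemma exists_isContraction_eq_mul {R : Matrix m n 𝕜} {S : Matrix n n 𝕜}
    (hS : S.IsHermitian) (hRS : Rᴴ * R = S * S) :
    ∃ V : Matrix m n 𝕜, V.IsContraction ∧ R = V * S ∧ Vᴴ * R = S := by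
  set T := cfc (·⁻¹ : ℝ → ℝ) S
  have hT : Tᴴ = T := (cfc_predicate (·⁻¹ : ℝ → ℝ) S).star_eq
  have hTSS : T * S * S = S := by
    rw [hS.cfc_mul_self, hS.cfc_mul_self]
    simp only [inv_mul_mul_self]
    exact cfc_id' ℝ S hS
  have hSTS : S * T * S = S := by
    rw [hS.self_mul_cfc, hS.cfc_mul_self]
    simp only [mul_inv_mul_cancel]
    exact cfc_id' ℝ S hS
  refine ⟨R * T, ?_, ?_, ?_⟩
  · have hVV : (R * T)ᴴ * (R * T) = T * S * S * T := by
      rw [conjTranspose_mul, hT, Matrix.mul_assoc, ← Matrix.mul_assoc Rᴴ, hRS]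
      simp only [Matrix.mul_assoc]
    rw [IsContraction, hVV, hS.cfc_mul_self, hS.cfc_mul_self, cfc_mul_cfc]
    refine cfc_le_one _ S fun x _ => ?_
    rcases eq_or_ne x 0 with rfl | hx
    · simp
    · simp [hx]
  · have hS0 : S * (1 - T * S) = 0 := by
      rw [Matrix.mul_sub, Matrix.mul_one, ← Matrix.mul_assoc, hSTS, sub_self]
    have hR0 : (R * (1 - T * S))ᴴ * (R * (1 - T * S)) = 0 := by
      rw [conjTranspose_mul, Matrix.mul_assoc, ← Matrix.mul_assoc Rᴴ, hRS, Matrix.mul_assoc,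
        hS0]
      simp
    rw [conjTranspose_mul_self_eq_zero, Matrix.mul_sub, Matrix.mul_one, sub_eq_zero] at hR0
    rwa [Matrix.mul_assoc]
  · rw [conjTranspose_mul, hT, Matrix.mul_assoc, hRS, ← Matrix.mul_assoc, hTSS]

omit [DecidableEq n] in
lemma two_mul_re_trace_conjTranspose_mul_le (A B : Matrix m n 𝕜) :
    2 * RCLike.re (Aᴴ * B).trace ≤ RCLike.re (Aᴴ * A).trace + RCLike.re (Bᴴ * B).trace := by
  have h := (posSemidef_conjTranspose_mul_self (A - B)).trace_nonneg
  have hBA : (Bᴴ * A).trace = star (Aᴴ * B).trace := by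
    rw [← trace_conjTranspose, conjTranspose_mul, conjTranspose_conjTranspose]
  rw [conjTranspose_sub, Matrix.sub_mul, Matrix.mul_sub, Matrix.mul_sub, trace_sub, trace_sub,
    trace_sub, hBA] at h
  have := (RCLike.nonneg_iff.1 h).1
  simp only [map_sub, RCLike.star_def, RCLike.conj_re] at this
  linarith

lemma IsContraction.re_trace_conjTranspose_mul_le {A : Matrix m n 𝕜} (hA : A.IsContraction)
    (Z : Matrix n l 𝕜) :
    RCLike.re ((A * Z)ᴴ * (A * Z)).trace ≤ RCLike.re (Zᴴ * Z).trace := by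
  have h := ((nonneg_iff_posSemidef.1 (sub_nonneg.2 hA)).conjTranspose_mul_mul_same Z).trace_nonneg
  rw [Matrix.mul_sub, Matrix.sub_mul, Matrix.mul_one, trace_sub] at h
  have := (RCLike.nonneg_iff.1 h).1
  rw [map_sub, sub_nonneg] at this
  simpa only [conjTranspose_mul, Matrix.mul_assoc] using this

lemma re_trace_conjTranspose_mul_mul_le {C D : Matrix m n 𝕜} (hC : C.IsContraction)
    (hD : D.IsContraction) {P : Matrix n n 𝕜} (hP : 0 ≤ P) :
    RCLike.re (Cᴴ * D * P).trace ≤ RCLike.re P.trace := by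
  set Z := CFC.sqrt P
  have hP' : P = Z * Zᴴ := by rw [(isHermitian_sqrt P).eq]; exact (CFC.sqrt_mul_sqrt_self P hP).symm
  have htr : (Cᴴ * D * P).trace = ((C * Z)ᴴ * (D * Z)).trace := by
    rw [hP', ← Matrix.mul_assoc, trace_mul_comm, conjTranspose_mul]
    simp only [Matrix.mul_assoc]
  have h1 := two_mul_re_trace_conjTranspose_mul_le (C * Z) (D * Z)
  have h2 := hC.re_trace_conjTranspose_mul_le Z
  have h3 := hD.re_trace_conjTranspose_mul_le Z
  have hPtr : P.trace = (Zᴴ * Z).trace := by rw [hP', trace_mul_comm]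
  rw [htr, hPtr]
  linarith

omit [DecidableEq n] in
lemma posSemidef_fromBlocks_conjTranspose_mul (R₁ : Matrix l m 𝕜) (R₂ : Matrix l n 𝕜) :
    (fromBlocks (R₁ᴴ * R₁) (R₁ᴴ * R₂) (R₁ᴴ * R₂)ᴴ (R₂ᴴ * R₂)).PosSemidef := by
  rw [conjTranspose_mul, conjTranspose_conjTranspose, ← fromRows_mul_fromCols,
    ← conjTranspose_fromCols_eq_fromRows_conjTranspose]
  exact posSemidef_conjTranspose_mul_self _

lemma PosSemidef.exists_fromBlocks_eq [DecidableEq m] {A : Matrix m m 𝕜} {X : Matrix m n 𝕜}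
    {B : Matrix n n 𝕜} (h : (fromBlocks A X Xᴴ B).PosSemidef) :
    ∃ (R₁ : Matrix (m ⊕ n) m 𝕜) (R₂ : Matrix (m ⊕ n) n 𝕜),
      A = R₁ᴴ * R₁ ∧ X = R₁ᴴ * R₂ ∧ B = R₂ᴴ * R₂ := by
  set R := CFC.sqrt (fromBlocks A X Xᴴ B)
  have hR : Rᴴ * R = fromBlocks A X Xᴴ B := by
    rw [(isHermitian_sqrt _).eq]
    exact CFC.sqrt_mul_sqrt_self _ h.nonneg
  rw [← fromCols_toCols R, conjTranspose_fromCols_eq_fromRows_conjTranspose,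
    fromRows_mul_fromCols, fromBlocks_inj] at hR
  exact ⟨R.toCols₁, R.toCols₂, hR.1.symm, hR.2.1.symm, hR.2.2.2.symm⟩

lemma conjTranspose_mul_self_sqrt_mul_sqrt (A : Matrix n n 𝕜) {B : Matrix n n 𝕜} (hB : 0 ≤ B) :
    (CFC.sqrt B * CFC.sqrt A)ᴴ * (CFC.sqrt B * CFC.sqrt A)
      = CFC.sqrt (CFC.sqrt A * B * CFC.sqrt A) * CFC.sqrt (CFC.sqrt A * B * CFC.sqrt A) := by
  have hABA : 0 ≤ CFC.sqrt A * B * CFC.sqrt A :=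
    IsSelfAdjoint.conjugate_nonneg hB (isHermitian_sqrt A)
  rw [CFC.sqrt_mul_sqrt_self _ hABA, conjTranspose_mul, (isHermitian_sqrt A).eq,
    (isHermitian_sqrt B).eq, Matrix.mul_assoc, ← Matrix.mul_assoc (CFC.sqrt B),
    CFC.sqrt_mul_sqrt_self _ hB, Matrix.mul_assoc]

lemma re_trace_le_of_posSemidef_fromBlocks {A X B : Matrix n n 𝕜}
    (h : (fromBlocks A X Xᴴ B).PosSemidef) :
    RCLike.re X.trace ≤ RCLike.re (CFC.sqrt (CFC.sqrt A * B * CFC.sqrt A)).trace := by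
  obtain ⟨R₁, R₂, hA, rfl, hB⟩ := h.exists_fromBlocks_eq
  have hA0 : 0 ≤ A := hA ▸ (posSemidef_conjTranspose_mul_self R₁).nonneg
  have hB0 : 0 ≤ B := hB ▸ (posSemidef_conjTranspose_mul_self R₂).nonneg
  obtain ⟨V₁, hV₁, hR₁, -⟩ := exists_isContraction_eq_mul (R := R₁) (isHermitian_sqrt A)
    (by rw [CFC.sqrt_mul_sqrt_self A hA0, hA])
  obtain ⟨V₂, hV₂, hR₂, -⟩ := exists_isContraction_eq_mul (R := R₂) (isHermitian_sqrt B)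
    (by rw [CFC.sqrt_mul_sqrt_self B hB0, hB])
  obtain ⟨W, hW, hM, -⟩ := exists_isContraction_eq_mul (isHermitian_sqrt _)
    (conjTranspose_mul_self_sqrt_mul_sqrt A hB0)
  calc RCLike.re (R₁ᴴ * R₂).trace
      = RCLike.re (V₁ᴴ * (V₂ * W) * CFC.sqrt (CFC.sqrt A * B * CFC.sqrt A)).trace := by
        rw [Matrix.mul_assoc V₁ᴴ, Matrix.mul_assoc V₂, ← hM, hR₁, hR₂, conjTranspose_mul,
          (isHermitian_sqrt A).eq, Matrix.mul_assoc (CFC.sqrt A), trace_mul_comm (CFC.sqrt A)]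
        simp only [Matrix.mul_assoc]
    _ ≤ _ := re_trace_conjTranspose_mul_mul_le hV₁ (hV₂.mul hW) (CFC.sqrt_nonneg _)

lemma exists_posSemidef_fromBlocks_trace_eq {A B : Matrix n n 𝕜} (hA : 0 ≤ A) (hB : 0 ≤ B) :
    ∃ X : Matrix n n 𝕜, (fromBlocks A X Xᴴ B).PosSemidef ∧
      X.trace = (CFC.sqrt (CFC.sqrt A * B * CFC.sqrt A)).trace := by
  obtain ⟨W, hW, -, hWM⟩ := exists_isContraction_eq_mul (isHermitian_sqrt _)
    (conjTranspose_mul_self_sqrt_mul_sqrt A hB)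
  -- `K` completes the contraction `W` to an isometry `fromRows W K`.
  set K := CFC.sqrt (1 - Wᴴ * W)
  have hK : Kᴴ * K = 1 - Wᴴ * W := by
    rw [(isHermitian_sqrt _).eq]
    exact CFC.sqrt_mul_sqrt_self _ (sub_nonneg.2 hW)
  set R₁ := fromRows (W * CFC.sqrt A) (K * CFC.sqrt A)
  set R₂ : Matrix (n ⊕ n) n 𝕜 := fromRows (CFC.sqrt B) 0
  have hR₁ : R₁ᴴ * R₁ = A := by
    rw [conjTranspose_fromRows_eq_fromCols_conjTranspose, fromCols_mul_fromRows,
      conjTranspose_mul, conjTranspose_mul, (isHermitian_sqrt A).eq]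
    calc CFC.sqrt A * Wᴴ * (W * CFC.sqrt A) + CFC.sqrt A * Kᴴ * (K * CFC.sqrt A)
        = CFC.sqrt A * (Wᴴ * W + Kᴴ * K) * CFC.sqrt A := by noncomm_ring
      _ = A := by rw [hK, add_sub_cancel, Matrix.mul_one, CFC.sqrt_mul_sqrt_self A hA]
  have hR₂ : R₂ᴴ * R₂ = B := by
    rw [conjTranspose_fromRows_eq_fromCols_conjTranspose, fromCols_mul_fromRows,
      (isHermitian_sqrt B).eq, CFC.sqrt_mul_sqrt_self B hB, Matrix.mul_zero, add_zero]
  have hX : R₁ᴴ * R₂ = CFC.sqrt A * Wᴴ * CFC.sqrt B := by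
    rw [conjTranspose_fromRows_eq_fromCols_conjTranspose, fromCols_mul_fromRows,
      conjTranspose_mul, (isHermitian_sqrt A).eq, Matrix.mul_zero, add_zero]
  refine ⟨R₁ᴴ * R₂, hR₁ ▸ hR₂ ▸ posSemidef_fromBlocks_conjTranspose_mul R₁ R₂, ?_⟩
  rw [hX, Matrix.mul_assoc, trace_mul_comm, Matrix.mul_assoc, hWM]

end Matrix

section PartialTrace

variable {L α γ : Type*} [Fintype L] [Fintype γ]

lemma ptraceC_conjTranspose_mul (R₁ R₂ : Matrix L (α × γ) ℂ) :
    ptraceC (R₁ᴴ * R₂)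
      = (of fun (p : L × γ) (i : α) => R₁ p.1 (i, p.2))ᴴ *
          of fun (p : L × γ) (i : α) => R₂ p.1 (i, p.2) := by
  refine Matrix.ext fun i j => ?_
  simp only [ptraceC, of_apply, mul_apply, conjTranspose_apply]
  rw [Fintype.sum_prod_type, Finset.sum_comm]

variable [Fintype α]

lemma trace_ptraceC (X : Matrix (α × γ) (α × γ) ℂ) : (ptraceC X).trace = X.trace := by
  simp [trace, ptraceC, Fintype.sum_prod_type]

variable [DecidableEq α] [DecidableEq γ]

lemma Matrix.PosSemidef.ptraceC {ρ : Matrix (α × γ) (α × γ) ℂ} (hρ : ρ.PosSemidef) :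
    (ptraceC ρ).PosSemidef := by
  have hρ' : ρ = (CFC.sqrt ρ)ᴴ * CFC.sqrt ρ := by
    rw [(isHermitian_sqrt ρ).eq, CFC.sqrt_mul_sqrt_self ρ hρ.nonneg]
  rw [hρ', ptraceC_conjTranspose_mul]
  exact posSemidef_conjTranspose_mul_self _

lemma posSemidef_fromBlocks_ptraceC {ρ X σ : Matrix (α × γ) (α × γ) ℂ}
    (h : (fromBlocks ρ X Xᴴ σ).PosSemidef) :
    (fromBlocks (ptraceC ρ) (ptraceC X) (ptraceC X)ᴴ (ptraceC σ)).PosSemidef := by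
  obtain ⟨R₁, R₂, rfl, rfl, rfl⟩ := h.exists_fromBlocks_eq
  simp only [ptraceC_conjTranspose_mul]
  exact posSemidef_fromBlocks_conjTranspose_mul _ _

end PartialTrace

section Fidelity

variable {n : Type*} [Fintype n] [DecidableEq n]

lemma msqrt_eq_sqrt {A : Matrix n n ℂ} (hA : A.PosSemidef) : msqrt A = CFC.sqrt A := by
  rw [msqrt, dif_pos hA, CFC.sqrt_eq_real_sqrt A hA.nonneg, cfcₙ_eq_cfc, hA.1.cfc_eq]
  rfl

lemma rootFidelity_eq {ρ σ : Matrix n n ℂ} (hρ : ρ.PosSemidef) (hσ : σ.PosSemidef) :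
    rootFidelity ρ σ = (CFC.sqrt (CFC.sqrt ρ * σ * CFC.sqrt ρ)).trace.re := by
  have hρσρ : (CFC.sqrt ρ * σ * CFC.sqrt ρ).PosSemidef :=
    nonneg_iff_posSemidef.1 (IsSelfAdjoint.conjugate_nonneg hσ.nonneg (isHermitian_sqrt ρ))
  rw [rootFidelity, msqrt_eq_sqrt hρ, msqrt_eq_sqrt hρσρ]

end Fidelity

/-- the Uhlmann root fidelity is monotone under the partial trace over
the second factor. -/
theorem rootFidelity_le_rootFidelity_ptrace (dAB dC : ℕ)
    (ρ σ : Matrix (Fin dAB × Fin dC) (Fin dAB × Fin dC) ℂ)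
    (hρ : IsDensityMatrix ρ) (hσ : IsDensityMatrix σ) :
    rootFidelity ρ σ ≤ rootFidelity (ptraceC ρ) (ptraceC σ) := by
  obtain ⟨X, hX, htr⟩ := exists_posSemidef_fromBlocks_trace_eq hρ.1.nonneg hσ.1.nonneg
  calc rootFidelity ρ σ = (ptraceC X).trace.re := by
        rw [rootFidelity_eq hρ.1 hσ.1, trace_ptraceC, htr]
    _ ≤ rootFidelity (ptraceC ρ) (ptraceC σ) := by
        rw [rootFidelity_eq hρ.1.ptraceC hσ.1.ptraceC]
        exact re_trace_le_of_posSemidef_fromBlocks (posSemidef_fromBlocks_ptraceC hX)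

end
end

section
/- Let d ≥ 2. On ℂ^d define X^j = |0⟩⟨j| + |j⟩⟨0| and Y^j = −i|0⟩⟨j| + i|j⟩⟨0| for 1 ≤ j ≤ d−1, and on ℂ^d ⊗ ℂ^d define M = (1/(2√(d−1))) ∑_{j=1}^{d−1} (X^j + Y^j) ⊗ (X^j + Y^j). Then for every real t, exp(−i t M)(e₀ ⊗ e₀) = cos t · (e₀ ⊗ e₀) + (sin t / √(d−1)) ∑_{j=1}^{d−1} e_j ⊗ e_j, where {e_j} is the standard basis of ℂ^d. In particular, at T = arccos(1/√d) the evolved vector equals (1/√d) ∑_{j=0}^{d−1} e_j ⊗ e_j, a maximally entangled state. -/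
open scoped Matrix Kronecker ComplexOrder

noncomputable section

/-- Standard basis vector `e_j` of `ℂ^d`. -/
def ket {d : ℕ} (j : Fin d) : Fin d → ℂ := fun i => if i = j then 1 else 0

/-- The vector `e₀` of `ℂ^d` (first standard basis vector). -/
def e₀ (d : ℕ) : Fin d → ℂ := fun i => if (i : ℕ) = 0 then 1 else 0

/-- `X^j = |0⟩⟨j| + |j⟩⟨0|`. -/
def Xop {d : ℕ} (j : Fin d) : Matrix (Fin d) (Fin d) ℂ :=
  Matrix.of fun a b =>
    (if (a : ℕ) = 0 ∧ b = j then 1 else 0) + (if a = j ∧ (b : ℕ) = 0 then 1 else 0)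

/-- `Y^j = -i|0⟩⟨j| + i|j⟩⟨0|`. -/
def Yop {d : ℕ} (j : Fin d) : Matrix (Fin d) (Fin d) ℂ :=
  Matrix.of fun a b =>
    (-Complex.I) * (if (a : ℕ) = 0 ∧ b = j then 1 else 0) +
      Complex.I * (if a = j ∧ (b : ℕ) = 0 then 1 else 0)

/-- The optimal direct-interaction Hamiltonian (in units of `ħΩ`),
`M = (1/(2√(d-1))) ∑_{j=1}^{d-1} (X^j + Y^j) ⊗ (X^j + Y^j)`. -/
def Mdi (d : ℕ) : Matrix (Fin d × Fin d) (Fin d × Fin d) ℂ :=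
  (((2 * Real.sqrt ((d : ℝ) - 1) : ℝ) : ℂ))⁻¹ •
    ∑ j ∈ Finset.univ.filter fun j : Fin d => (j : ℕ) ≠ 0,
      (Xop j + Yop j) ⊗ₖ (Xop j + Yop j)

/-!
With `u = e₀ ⊗ e₀` and `w = ∑_{j ≥ 1} e_j ⊗ e_j`, the Hamiltonian satisfies
`M u = (i / √(d-1)) w` and `M w = -i √(d-1) u`. Hence `A = -i t M` maps `u ↦ t v` and `v ↦ -t u`
for `v = w / √(d-1)`, so `u ± i v` are eigenvectors of `A` with eigenvalues `∓ i t`, and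
`exp A u = cos t · u + sin t · v`. At `cos T = 1/√d` both coefficients equal `1/√d`.
-/

open Complex

theorem Matrix.pow_mulVec_of_mulVec_eq_smul {N R : Type*} [Fintype N] [DecidableEq N] [CommRing R]
    {A : Matrix N N R} {x : N → R} {μ : R} (h : A *ᵥ x = μ • x) (n : ℕ) :
    (A ^ n) *ᵥ x = μ ^ n • x := by
  induction n with
  | zero => simp
  | succ n ih =>
    rw [pow_succ', ← Matrix.mulVec_mulVec, ih, Matrix.mulVec_smul, h, smul_smul, pow_succ]

theorem Matrix.exp_mulVec_of_mulVec_eq_smul {N : Type*} [Fintype N] [DecidableEq N]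
    {A : Matrix N N ℂ} {x : N → ℂ} {μ : ℂ} (h : A *ᵥ x = μ • x) :
    NormedSpace.exp A *ᵥ x = NormedSpace.exp μ • x := by
  let _ : SeminormedRing (Matrix N N ℂ) := Matrix.linftyOpSemiNormedRing
  let _ : NormedRing (Matrix N N ℂ) := Matrix.linftyOpNormedRing
  let _ : NormedAlgebra ℂ (Matrix N N ℂ) := Matrix.linftyOpNormedAlgebra
  have hA := (NormedSpace.exp_series_hasSum_exp' (𝕂 := ℂ) A).map
    (Matrix.mulVec.addMonoidHomLeft x) (Continuous.matrix_mulVec continuous_id continuous_const)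
  refine hA.unique ?_
  simpa [Function.comp_def, Matrix.mulVec.addMonoidHomLeft, Matrix.smul_mulVec,
    Matrix.pow_mulVec_of_mulVec_eq_smul h, smul_smul] using (NormedSpace.exp_series_hasSum_exp' (𝕂 := ℂ) μ).smul_const x

theorem Matrix.exp_mulVec_eq_cos_smul_add_sin_smul {N : Type*} [Fintype N] [DecidableEq N]
    {A : Matrix N N ℂ} {u v : N → ℂ} {t : ℂ} (hu : A *ᵥ u = t • v) (hv : A *ᵥ v = -t • u) :
    NormedSpace.exp A *ᵥ u = cos t • u + sin t • v := by
  have hplus : A *ᵥ (u + I • v) = (-t * I) • (u + I • v) := by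
    rw [Matrix.mulVec_add, Matrix.mulVec_smul, hu, hv]
    match_scalars
    · linear_combination t * I_sq
    · ring
  have hminus : A *ᵥ (u - I • v) = (t * I) • (u - I • v) := by
    rw [Matrix.mulVec_sub, Matrix.mulVec_smul, hu, hv]
    match_scalars
    · linear_combination t * I_sq
    · ring
  have hcos : cos t = (exp (t * I) + exp (-t * I)) / 2 := by rw [← two_cos]; ring
  have hsin : sin t = (exp (-t * I) - exp (t * I)) * I / 2 := by rw [← two_sin]; ring
  calc NormedSpace.exp A *ᵥ u
      = (2 : ℂ)⁻¹ • (NormedSpace.exp A *ᵥ (u + I • v) + NormedSpace.exp A *ᵥ (u - I • v)) := by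
        rw [← Matrix.mulVec_add, ← Matrix.mulVec_smul]; congr 1; module
    _ = (2 : ℂ)⁻¹ • (exp (-t * I) • (u + I • v) + exp (t * I) • (u - I • v)) := by
        rw [Matrix.exp_mulVec_of_mulVec_eq_smul hplus, Matrix.exp_mulVec_of_mulVec_eq_smul hminus,
          ← exp_eq_exp_ℂ]
    _ = cos t • u + sin t • v := by
        rw [hcos, hsin]
        match_scalars <;> ring

theorem kronecker_mulVec_tensorVec {l m n p : Type*} [Fintype m] [Fintype p]
    (A : Matrix l m ℂ) (B : Matrix n p ℂ) (v : m → ℂ) (w : p → ℂ) :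
    (A ⊗ₖ B) *ᵥ tensorVec v w = tensorVec (A *ᵥ v) (B *ᵥ w) := by
  ext ⟨i, k⟩
  simp only [Matrix.mulVec, dotProduct, tensorVec, Matrix.kroneckerMap_apply,
    Fintype.sum_prod_type, Finset.sum_mul_sum]
  exact Finset.sum_congr rfl fun _ _ => Finset.sum_congr rfl fun _ _ => by ring

theorem tensorVec_smul_smul {α β : Type*} (a b : ℂ) (v : α → ℂ) (w : β → ℂ) :
    tensorVec (a • v) (b • w) = (a * b) • tensorVec v w := by
  ext p
  simp only [tensorVec, Pi.smul_apply, smul_eq_mul]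
  ring

theorem tensorVec_zero_left {α β : Type*} (w : β → ℂ) : tensorVec (0 : α → ℂ) w = 0 := by
  ext p
  simp [tensorVec]

theorem ket_eq_single {d : ℕ} (j : Fin d) : ket j = Pi.single j 1 := by
  ext i
  simp [ket, Pi.single_apply]

theorem e₀_eq_ket_zero {d : ℕ} [NeZero d] : e₀ d = ket 0 := by
  ext i
  simp only [e₀, ket, Fin.ext_iff, Fin.val_zero]

theorem Xop_add_Yop_mulVec_e₀ {d : ℕ} {j : Fin d} (hj : (j : ℕ) ≠ 0) :
    (Xop j + Yop j) *ᵥ e₀ d = (1 + I) • ket j := by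
  have : NeZero d := ⟨by omega⟩
  have hj' : (0 : Fin d) ≠ j := fun h => hj (by simp [← h])
  rw [e₀_eq_ket_zero, ket_eq_single, Matrix.mulVec_single_one]
  ext a
  by_cases ha : a = j
  · subst ha; simp [Xop, Yop, ket, hj']
  · simp [Xop, Yop, ket, ha, hj']

theorem Xop_add_Yop_mulVec_ket {d : ℕ} (j : Fin d) {k : Fin d} (hk : (k : ℕ) ≠ 0) :
    (Xop j + Yop j) *ᵥ ket k = if j = k then (1 - I) • e₀ d else 0 := by
  rw [ket_eq_single, Matrix.mulVec_single_one]
  ext a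
  by_cases hjk : j = k
  · subst hjk; by_cases ha : (a : ℕ) = 0 <;> simp [Xop, Yop, e₀, ha, hk]; ring
  · simp [Xop, Yop, Ne.symm hjk, hjk, hk]

def excitedPairs (d : ℕ) : Fin d × Fin d → ℂ :=
  ∑ j ∈ Finset.univ.filter fun j : Fin d => (j : ℕ) ≠ 0, tensorVec (ket j) (ket j)

theorem card_filter_val_ne_zero {d : ℕ} :
    (Finset.univ.filter fun j : Fin d => (j : ℕ) ≠ 0).card = d - 1 := by
  cases d with
  | zero => rfl
  | succ d => simp [Finset.filter_ne', Finset.card_erase_of_mem]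

theorem tensorVec_e₀_add_excitedPairs {d : ℕ} [NeZero d] :
    tensorVec (e₀ d) (e₀ d) + excitedPairs d = ∑ j : Fin d, tensorVec (ket j) (ket j) := by
  rw [excitedPairs, e₀_eq_ket_zero, ← Finset.add_sum_erase _ _ (Finset.mem_univ 0)]
  congr 2
  ext j
  simp

theorem Mdi_mulVec_tensorVec_e₀ (d : ℕ) :
    Mdi d *ᵥ tensorVec (e₀ d) (e₀ d) = (I / (√((d : ℝ) - 1) : ℂ)) • excitedPairs d := by
  have hterm : ∀ j ∈ Finset.univ.filter fun j : Fin d => (j : ℕ) ≠ 0,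
      ((Xop j + Yop j) ⊗ₖ (Xop j + Yop j)) *ᵥ tensorVec (e₀ d) (e₀ d) =
        ((1 + I) * (1 + I)) • tensorVec (ket j) (ket j) := fun j hj => by
    rw [kronecker_mulVec_tensorVec, Xop_add_Yop_mulVec_e₀ (Finset.mem_filter.1 hj).2,
      tensorVec_smul_smul]
  rw [Mdi, Matrix.smul_mulVec, Matrix.sum_mulVec, Finset.sum_congr rfl hterm, ← Finset.smul_sum,
    smul_smul, excitedPairs]
  congr 1
  push_cast
  linear_combination (2⁻¹ * (√((d : ℝ) - 1) : ℂ)⁻¹) * I_sq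

theorem kronecker_Xop_add_Yop_mulVec_excitedPairs {d : ℕ} {j : Fin d} (hj : (j : ℕ) ≠ 0) :
    ((Xop j + Yop j) ⊗ₖ (Xop j + Yop j)) *ᵥ excitedPairs d =
      ((1 - I) * (1 - I)) • tensorVec (e₀ d) (e₀ d) := by
  have hterm : ∀ k ∈ Finset.univ.filter fun k : Fin d => (k : ℕ) ≠ 0,
      ((Xop j + Yop j) ⊗ₖ (Xop j + Yop j)) *ᵥ tensorVec (ket k) (ket k) =
        if j = k then ((1 - I) * (1 - I)) • tensorVec (e₀ d) (e₀ d) else 0 := fun k hk => by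
    rw [kronecker_mulVec_tensorVec, Xop_add_Yop_mulVec_ket j (Finset.mem_filter.1 hk).2]
    split_ifs
    exacts [tensorVec_smul_smul _ _ _ _, tensorVec_zero_left _]
  rw [excitedPairs, Matrix.mulVec_sum, Finset.sum_congr rfl hterm, Finset.sum_ite_eq,
    if_pos (by simpa using hj)]

theorem sqrt_natCast_sub_one_pos {d : ℕ} (hd : 2 ≤ d) : 0 < √((d : ℝ) - 1) := by
  have : (2 : ℝ) ≤ d := by exact_mod_cast hd
  exact Real.sqrt_pos.2 (by linarith)

theorem Mdi_mulVec_excitedPairs {d : ℕ} (hd : 2 ≤ d) :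
    Mdi d *ᵥ excitedPairs d = (-I * (√((d : ℝ) - 1) : ℂ)) • tensorVec (e₀ d) (e₀ d) := by
  have hterm : ∀ j ∈ Finset.univ.filter fun j : Fin d => (j : ℕ) ≠ 0,
      ((Xop j + Yop j) ⊗ₖ (Xop j + Yop j)) *ᵥ excitedPairs d =
        ((1 - I) * (1 - I)) • tensorVec (e₀ d) (e₀ d) := fun j hj =>
    kronecker_Xop_add_Yop_mulVec_excitedPairs (Finset.mem_filter.1 hj).2
  have hs : (√((d : ℝ) - 1) : ℂ) ≠ 0 := ofReal_ne_zero.2 (sqrt_natCast_sub_one_pos hd).ne'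
  have hcard : (((d - 1 : ℕ) : ℝ) : ℂ) = (√((d : ℝ) - 1) : ℂ) ^ 2 := by
    rw [← ofReal_pow, Real.sq_sqrt (Real.sqrt_pos.1 (sqrt_natCast_sub_one_pos hd)).le,
      Nat.cast_sub (by omega), Nat.cast_one]
  rw [Mdi, Matrix.smul_mulVec, Matrix.sum_mulVec, Finset.sum_congr rfl hterm, Finset.sum_const,
    card_filter_val_ne_zero, ← Nat.cast_smul_eq_nsmul ℂ, smul_smul, smul_smul]
  congr 1
  rw [← ofReal_natCast, hcard]
  push_cast
  field_simp
  linear_combination I_sq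

theorem exp_Mdi_mulVec_tensorVec_e₀ {d : ℕ} (hd : 2 ≤ d) (t : ℝ) :
    NormedSpace.exp ((-(I * (t : ℂ))) • Mdi d) *ᵥ tensorVec (e₀ d) (e₀ d) =
      ((Real.cos t : ℝ) : ℂ) • tensorVec (e₀ d) (e₀ d) +
        (((Real.sin t : ℝ) : ℂ) / (√((d : ℝ) - 1) : ℂ)) • excitedPairs d := by
  have hs : (√((d : ℝ) - 1) : ℂ) ≠ 0 := ofReal_ne_zero.2 (sqrt_natCast_sub_one_pos hd).ne'
  have hu : ((-(I * (t : ℂ))) • Mdi d) *ᵥ tensorVec (e₀ d) (e₀ d) =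
      (t : ℂ) • ((√((d : ℝ) - 1) : ℂ)⁻¹ • excitedPairs d) := by
    rw [Matrix.smul_mulVec, Mdi_mulVec_tensorVec_e₀, smul_smul, smul_smul]
    congr 1
    linear_combination (-(t : ℂ) * (√((d : ℝ) - 1) : ℂ)⁻¹) * I_sq
  have hv : ((-(I * (t : ℂ))) • Mdi d) *ᵥ ((√((d : ℝ) - 1) : ℂ)⁻¹ • excitedPairs d) =
      (-(t : ℂ)) • tensorVec (e₀ d) (e₀ d) := by
    rw [Matrix.mulVec_smul, Matrix.smul_mulVec, Mdi_mulVec_excitedPairs hd, smul_smul, smul_smul]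
    congr 1
    field_simp
    linear_combination (t : ℂ) * I_sq
  rw [Matrix.exp_mulVec_eq_cos_smul_add_sin_smul hu hv, smul_smul, ← ofReal_cos,
    ← ofReal_sin, div_eq_mul_inv]

theorem Real.sin_arccos_inv_sqrt {x : ℝ} (hx : 0 < x) :
    Real.sin (Real.arccos (√x)⁻¹) = √(x - 1) / √x := by
  rw [Real.sin_arccos, inv_pow, Real.sq_sqrt hx.le, ← Real.sqrt_div' _ hx.le]
  congr 1
  field_simp

theorem isONB_ket (d : ℕ) : IsONB (ket : Fin d → Fin d → ℂ) := by
  intro j k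
  simp only [cinner, ket]
  by_cases h : j = k <;> simp [h, eq_comm]

/-- the optimal direct dynamics takes `|00⟩` to
`cos t |00⟩ + (sin t/√(d-1)) ∑_{j≥1} |jj⟩`, reaching the maximally entangled state
`(1/√d) ∑_j |jj⟩` at `T = arccos(1/√d)`. -/
theorem direct_dynamics_optimal (d : ℕ) (hd : 2 ≤ d) :
    (∀ t : ℝ,
      NormedSpace.exp ((-(Complex.I * (t : ℂ))) • Mdi d) *ᵥ tensorVec (e₀ d) (e₀ d) =
        ((Real.cos t : ℝ) : ℂ) • tensorVec (e₀ d) (e₀ d) +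
          (((Real.sin t : ℝ) : ℂ) / ((Real.sqrt ((d : ℝ) - 1) : ℝ) : ℂ)) •
            ∑ j ∈ Finset.univ.filter fun j : Fin d => (j : ℕ) ≠ 0,
              tensorVec (ket j) (ket j)) ∧
    NormedSpace.exp ((-(Complex.I * ((Real.arccos (Real.sqrt d)⁻¹ : ℝ) : ℂ))) • Mdi d) *ᵥ
        tensorVec (e₀ d) (e₀ d) =
      (((Real.sqrt d : ℝ) : ℂ))⁻¹ • ∑ j : Fin d, tensorVec (ket j) (ket j) ∧
    IsMaxEnt ((((Real.sqrt d : ℝ) : ℂ))⁻¹ • ∑ j : Fin d, tensorVec (ket j) (ket j)) := by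
  refine ⟨exp_Mdi_mulVec_tensorVec_e₀ hd, ?_, ket, ket, isONB_ket d, isONB_ket d, rfl⟩
  have : NeZero d := ⟨by omega⟩
  have hd' : (1 : ℝ) < d := by exact_mod_cast hd
  have hcos : Real.cos (Real.arccos (√d)⁻¹) = (√d)⁻¹ :=
    Real.cos_arccos (by linarith [inv_nonneg.2 (Real.sqrt_nonneg d)])
      (inv_le_one_of_one_le₀ (Real.one_le_sqrt.2 hd'.le))
  have hsin : Real.sin (Real.arccos (√d)⁻¹) / √((d : ℝ) - 1) = (√d)⁻¹ := by
    rw [Real.sin_arccos_inv_sqrt (by linarith)]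
    field_simp [(sqrt_natCast_sub_one_pos hd).ne']
  rw [exp_Mdi_mulVec_tensorVec_e₀ hd, hcos, ← ofReal_div, hsin, ofReal_inv, ← smul_add,
    tensorVec_e₀_add_excitedPairs]
end
end

section
/- Let d ≥ 1 and let ρ be a density matrix on ℂ^d ⊗ ℂ^d. Then the negativity of ρ with respect to the bipartition into the two tensor factors satisfies N(ρ) ≤ (d−1)/2. -/
open scoped Matrix Kronecker ComplexOrder

noncomputable section

/-
The partial transpose preserves the trace and the Hilbert–Schmidt pairing `tr (A B)`, so its
eigenvalues `λ` satisfy `∑ λ = tr ρ = 1` and `∑ λ² = tr ρ² ≤ 1`. Since `∑ |λ| = 1 + 2 N(ρ)`,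
Cauchy–Schwarz over the `d²` eigenvalues gives `(1 + 2 N(ρ))² ≤ d² ∑ λ² ≤ d²`.
-/

open Matrix

namespace Matrix.IsHermitian

variable {n 𝕜 : Type*} [Fintype n] [DecidableEq n] [RCLike 𝕜] {A : Matrix n n 𝕜}

lemma sum_eigenvalues_eq_one (hA : A.IsHermitian) (h : A.trace = 1) :
    ∑ i, hA.eigenvalues i = 1 := by
  exact_mod_cast hA.trace_eq_sum_eigenvalues.symm.trans h

lemma trace_mul_self_eq_sum_sq_eigenvalues (hA : A.IsHermitian) :
    (A * A).trace = ∑ i, (hA.eigenvalues i : 𝕜) ^ 2 := by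
  conv_lhs => rw [hA.spectral_theorem, ← map_mul, Unitary.conjStarAlgAut_apply, trace_mul_cycle,
    ← mul_assoc, Unitary.coe_star_mul_self, one_mul, diagonal_mul_diagonal, trace_diagonal]
  simp [sq]

lemma sum_sq_eigenvalues_eq_of_trace_mul_self_eq {m : Type*} [Fintype m] [DecidableEq m]
    {B : Matrix m m 𝕜} (hA : A.IsHermitian) (hB : B.IsHermitian)
    (h : (A * A).trace = (B * B).trace) :
    ∑ i, hA.eigenvalues i ^ 2 = ∑ i, hB.eigenvalues i ^ 2 := by
  exact_mod_cast hA.trace_mul_self_eq_sum_sq_eigenvalues.symm.trans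
    (h.trans hB.trace_mul_self_eq_sum_sq_eigenvalues)

end Matrix.IsHermitian

section PartialTranspose

variable {α β : Type*}

lemma isHermitian_ptB {ρ : Matrix (α × β) (α × β) ℂ} (hρ : ρ.IsHermitian) :
    (ptB ρ).IsHermitian := by
  ext p q
  exact congrFun₂ hρ (p.1, q.2) (q.1, p.2)

variable [Fintype α] [Fintype β]

lemma trace_ptB (ρ : Matrix (α × β) (α × β) ℂ) : (ptB ρ).trace = ρ.trace := rfl

lemma trace_ptB_mul_ptB (A B : Matrix (α × β) (α × β) ℂ) :
    (ptB A * ptB B).trace = (A * B).trace := by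
  simp only [trace, diag, mul_apply, ptB, of_apply, ← Fintype.sum_prod_type']
  -- `((p₁, p₂), (q₁, q₂)) ↦ ((p₁, q₂), (q₁, p₂))` is an involution matching the two sums
  exact Fintype.sum_equiv
    { toFun := fun x => ((x.1.1, x.2.2), (x.2.1, x.1.2))
      invFun := fun x => ((x.1.1, x.2.2), (x.2.1, x.1.2))
      left_inv := fun _ => rfl
      right_inv := fun _ => rfl } _ _ fun _ => rfl

end PartialTranspose

lemma IsDensityMatrix.sum_sq_eigenvalues_le_one {n : Type*} [Fintype n] [DecidableEq n]
    {ρ : Matrix n n ℂ} (hρ : IsDensityMatrix ρ) : ∑ i, hρ.1.1.eigenvalues i ^ 2 ≤ 1 := by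
  simpa [hρ.1.1.sum_eigenvalues_eq_one hρ.2] using
    Finset.sum_sq_le_sq_sum_of_nonneg (s := Finset.univ) fun i _ => hρ.1.eigenvalues_nonneg i

lemma sq_one_add_two_mul_sum_max_zero_neg_le_card {ι : Type*} [Fintype ι] {l : ι → ℝ}
    (hsum : ∑ i, l i = 1) (hsq : ∑ i, l i ^ 2 ≤ 1) :
    (1 + 2 * ∑ i, max 0 (-l i)) ^ 2 ≤ Fintype.card ι := by
  have habs : ∑ i, |l i| = 1 + 2 * ∑ i, max 0 (-l i) := by
    have (x : ℝ) : |x| = x + 2 * max 0 (-x) := by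
      rcases le_total 0 x with h | h
      · rw [abs_of_nonneg h, max_eq_left (by linarith)]; ring
      · rw [abs_of_nonpos h, max_eq_right (by linarith)]; ring
    simp only [this, Finset.sum_add_distrib, hsum, Finset.mul_sum]
  calc (1 + 2 * ∑ i, max 0 (-l i)) ^ 2 = (∑ i, |l i|) ^ 2 := by rw [habs]
    _ ≤ Fintype.card ι * ∑ i, |l i| ^ 2 := sq_sum_le_card_mul_sum_sq
    _ ≤ Fintype.card ι := by
        simpa only [sq_abs, mul_one] using mul_le_mul_of_nonneg_left hsq (Nat.cast_nonneg _)

theorem negativity_le_general (d : ℕ)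
    (ρ : Matrix (Fin d × Fin d) (Fin d × Fin d) ℂ) (hρ : IsDensityMatrix ρ) :
    negativity ρ ≤ ((d : ℝ) - 1) / 2 := by
  have hH := isHermitian_ptB hρ.1.1
  have hsum := hH.sum_eigenvalues_eq_one ((trace_ptB ρ).trans hρ.2)
  have hsq : ∑ i, hH.eigenvalues i ^ 2 ≤ 1 :=
    (hH.sum_sq_eigenvalues_eq_of_trace_mul_self_eq hρ.1.1 (trace_ptB_mul_ptB ρ ρ)).trans_le
      hρ.sum_sq_eigenvalues_le_one
  have key := sq_one_add_two_mul_sum_max_zero_neg_le_card hsum hsq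
  rw [Fintype.card_prod, Fintype.card_fin, Nat.cast_mul, ← sq] at key
  rw [negativity, dif_pos hH]
  linarith [(pow_le_pow_iff_left₀ (by positivity) (Nat.cast_nonneg d) two_ne_zero).mp key]

/-- the negativity of any density matrix on `ℂ^d ⊗ ℂ^d` is at most
`(d-1)/2`. -/
theorem negativity_le (d : ℕ) (hd : 1 ≤ d)
    (ρ : Matrix (Fin d × Fin d) (Fin d × Fin d) ℂ) (hρ : IsDensityMatrix ρ) :
    negativity ρ ≤ ((d : ℝ) - 1) / 2 :=
  negativity_le_general d ρ hρ

end
end
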